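/- Let G be a simple connected graph. For every edge xy of G, κ_LLY(x,y) ≥ κ_0(x,y) = 1 − W(m_x^0, m_y^0), where m_x^0 and m_y^0 are the (non-lazy) uniform random walk distributions at x and y. -/

import Mathlib

open Filter Set

variable {V : Type*}

-- The `α`-lazy random walk distribution at vertex `x`.
open Classical in
noncomputable def lazyWalk (G : SimpleGraph V) [G.LocallyFinite] (α : ℝ) (x : V) : V → ℝ :=
  fun v => if v = x then α else if G.Adj x v then (1 - α) / (G.degree x : ℝ) else 0

/-- `A` is a coupling between the finitely supported distributions `m₁` and `m₂`. -/
def IsCoupling (m₁ m₂ : V → ℝ) (A : V → V → ℝ) : Prop :=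
  (Function.support fun p : V × V => A p.1 p.2).Finite ∧
  (∀ x y, 0 ≤ A x y ∧ A x y ≤ 1) ∧
  (∀ x, ∑ᶠ y, A x y = m₁ x) ∧
  (∀ y, ∑ᶠ x, A x y = m₂ y)

/-- The transportation (Wasserstein) distance between two distributions on `V`,
with respect to the graph distance of `G`. -/
noncomputable def transportDist (G : SimpleGraph V) (m₁ m₂ : V → ℝ) : ℝ :=
  sInf {w : ℝ | ∃ A : V → V → ℝ, IsCoupling m₁ m₂ A ∧
    w = ∑ᶠ p : V × V, A p.1 p.2 * (G.dist p.1 p.2 : ℝ)}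

/-- The `α`-Ricci curvature `κ_α(x,y)`. -/
noncomputable def alphaRicci (G : SimpleGraph V) [G.LocallyFinite] (α : ℝ) (x y : V) : ℝ :=
  1 - transportDist G (lazyWalk G α x) (lazyWalk G α y) / (G.dist x y : ℝ)

/-- `κ` is the Lin–Lu–Yau Ricci curvature of the pair `(x,y)`:
the limit of `κ_α(x,y)/(1-α)` as `α → 1⁻`. -/
def HasLLYCurv (G : SimpleGraph V) [G.LocallyFinite] (x y : V) (κ : ℝ) : Prop :=
  Tendsto (fun α : ℝ => alphaRicci G α x y / (1 - α)) (nhdsWithin 1 (Set.Iio 1)) (nhds κ)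

/-- `G` is positively curved: every edge has positive Lin–Lu–Yau Ricci curvature. -/
def PositivelyCurved (G : SimpleGraph V) [G.LocallyFinite] : Prop :=
  ∀ ⦃x y : V⦄, G.Adj x y → ∃ κ : ℝ, 0 < κ ∧ HasLLYCurv G x y κ

/-- `G` is planar: it admits a topological embedding in the plane, i.e. an injective
placement of the vertices together with arcs for the edges, where arcs are injective
continuous curves joining the endpoints, not passing through any other vertex, and
two arcs of distinct edges meet only in common endpoints. -/
def IsPlanar (G : SimpleGraph V) : Prop :=
  ∃ (f : V → ℝ × ℝ) (e : ∀ u v : V, G.Adj u v → Set.Icc (0:ℝ) 1 → ℝ × ℝ),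
    Function.Injective f ∧
    (∀ u v (h : G.Adj u v), Continuous (e u v h)) ∧
    (∀ u v (h : G.Adj u v), Function.Injective (e u v h)) ∧
    (∀ u v (h : G.Adj u v),
      e u v h ⟨0, Set.left_mem_Icc.mpr zero_le_one⟩ = f u ∧
      e u v h ⟨1, Set.right_mem_Icc.mpr zero_le_one⟩ = f v) ∧
    (∀ u v (h : G.Adj u v) (w : V), w ≠ u → w ≠ v → f w ∉ Set.range (e u v h)) ∧
    (∀ u v (h : G.Adj u v) (u' v' : V) (h' : G.Adj u' v'), ({u, v} : Set V) ≠ {u', v'} →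
      Set.range (e u v h) ∩ Set.range (e u' v' h') ⊆ (f '' {u, v}) ∩ (f '' {u', v'}))

/-!
The `α`-lazy walk is the mixture `m_x^α = α δ_x + (1 - α) m_x^0`. Mixing couplings shows that the
transportation distance is convex under such mixtures, and `δ_x, δ_y` are coupled at cost
`d(x, y) = 1`, so `W(m_x^α, m_y^α) ≤ α + (1 - α) W(m_x^0, m_y^0)`. Hence
`κ_α(x, y) / (1 - α) ≥ κ_0(x, y)` for every `α ∈ [0, 1)`, and the bound passes to the limit.
-/

open Function Pointwise

lemma finsum_mul_add_mul {ι : Type*} {f g : ι → ℝ} (hf : HasFiniteSupport f)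
    (hg : HasFiniteSupport g) (a b : ℝ) :
    ∑ᶠ i, (a * f i + b * g i) = a * ∑ᶠ i, f i + b * ∑ᶠ i, g i := by
  rw [finsum_add_distrib (f := fun i => a * f i) (g := fun i => b * g i)
    (HasFiniteSupport.mul_right (fun _ => a) hf) (HasFiniteSupport.mul_right (fun _ => b) hg),
    mul_finsum, mul_finsum]

lemma finsum_pi_single {α M : Type*} [DecidableEq α] [AddCommMonoid M] (a : α) (c : M) :
    ∑ᶠ i, (Pi.single a c : α → M) i = c := by
  rw [finsum_eq_single _ a fun _ hi => Pi.single_eq_of_ne hi _, Pi.single_eq_same]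

lemma pi_single_pi_single_apply {α β M : Type*} [DecidableEq α] [DecidableEq β] [Zero M] (a : α)
    (b : β) (c : M) (u : α) (v : β) :
    (Pi.single a (Pi.single b c) : α → β → M) u v = (Pi.single (a, b) c : α × β → M) (u, v) :=
  congrFun (Pi.uncurry_single_single a b c) (u, v)

section Transport

variable (G : SimpleGraph V)

noncomputable def couplingCost (A : V → V → ℝ) : ℝ :=
  ∑ᶠ p : V × V, A p.1 p.2 * (G.dist p.1 p.2 : ℝ)

def transportCosts (m₁ m₂ : V → ℝ) : Set ℝ :=
  {w | ∃ A, IsCoupling m₁ m₂ A ∧ w = couplingCost G A}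

variable {G}

namespace IsCoupling

variable {m₁ m₂ n₁ n₂ : V → ℝ} {A B : V → V → ℝ}

lemma hasFiniteSupport_row (hA : IsCoupling m₁ m₂ A) (u : V) : HasFiniteSupport (A u) :=
  (hA.1.image Prod.snd).subset fun v hv => ⟨(u, v), hv, rfl⟩

lemma hasFiniteSupport_col (hA : IsCoupling m₁ m₂ A) (v : V) :
    HasFiniteSupport fun u => A u v :=
  (hA.1.image Prod.fst).subset fun u hu => ⟨(u, v), hu, rfl⟩

lemma couplingCost_nonneg (hA : IsCoupling m₁ m₂ A) : 0 ≤ couplingCost G A :=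
  finsum_nonneg fun p => mul_nonneg (hA.2.1 p.1 p.2).1 (Nat.cast_nonneg _)

lemma combo (hA : IsCoupling m₁ m₂ A) (hB : IsCoupling n₁ n₂ B) {t : ℝ} (h0 : 0 ≤ t)
    (h1 : t ≤ 1) :
    IsCoupling (t • m₁ + (1 - t) • n₁) (t • m₂ + (1 - t) • n₂) (t • A + (1 - t) • B) := by
  refine ⟨?_, fun u v => ?_, fun u => ?_, fun v => ?_⟩
  · exact (HasFiniteSupport.mul_right _ hA.1).add (HasFiniteSupport.mul_right _ hB.1)
  · obtain ⟨hA0, hA1⟩ := hA.2.1 u v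
    obtain ⟨hB0, hB1⟩ := hB.2.1 u v
    simp only [Pi.add_apply, Pi.smul_apply, smul_eq_mul]
    constructor <;> nlinarith
  · simp only [Pi.add_apply, Pi.smul_apply, smul_eq_mul]
    rw [finsum_mul_add_mul (hA.hasFiniteSupport_row u) (hB.hasFiniteSupport_row u), hA.2.2.1,
      hB.2.2.1]
  · simp only [Pi.add_apply, Pi.smul_apply, smul_eq_mul]
    rw [finsum_mul_add_mul (hA.hasFiniteSupport_col v) (hB.hasFiniteSupport_col v), hA.2.2.2,
      hB.2.2.2]

end IsCoupling

lemma isCoupling_single [DecidableEq V] (x y : V) :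
    IsCoupling (Pi.single x 1) (Pi.single y 1) (Pi.single x (Pi.single y 1)) := by
  refine ⟨?_, fun u v => ?_, fun u => ?_, fun v => ?_⟩
  · simp only [pi_single_pi_single_apply]
    exact (Set.finite_singleton _).subset Pi.support_single_subset
  · rw [pi_single_pi_single_apply, Pi.single_apply]
    split_ifs <;> norm_num
  · rcases eq_or_ne u x with rfl | hu
    · simp [finsum_pi_single]
    · simp [hu]
  · rw [finsum_eq_single _ x fun u hu => by simp [hu], Pi.single_eq_same]

lemma isCoupling_mul {m₁ m₂ : V → ℝ} (hm₁ : 0 ≤ m₁) (hm₂ : 0 ≤ m₂) (hf₁ : HasFiniteSupport m₁)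
    (hf₂ : HasFiniteSupport m₂) (hs₁ : ∑ᶠ u, m₁ u = 1) (hs₂ : ∑ᶠ v, m₂ v = 1) :
    IsCoupling m₁ m₂ fun u v => m₁ u * m₂ v := by
  have hle₁ u : m₁ u ≤ 1 := hs₁ ▸ single_le_finsum u hf₁ hm₁
  have hle₂ v : m₂ v ≤ 1 := hs₂ ▸ single_le_finsum v hf₂ hm₂
  refine ⟨(hf₁.prod hf₂).subset fun p hp => ?_, fun u v => ?_, fun u => ?_, fun v => ?_⟩
  · exact ⟨left_ne_zero_of_mul hp, right_ne_zero_of_mul hp⟩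
  · exact ⟨mul_nonneg (hm₁ u) (hm₂ v), mul_le_one₀ (hle₁ u) (hm₂ v) (hle₂ v)⟩
  · rw [← mul_finsum, hs₂, mul_one]
  · rw [← finsum_mul, hs₁, one_mul]

lemma couplingCost_smul_add_smul {A B : V → V → ℝ}
    (hA : HasFiniteSupport fun p : V × V => A p.1 p.2)
    (hB : HasFiniteSupport fun p : V × V => B p.1 p.2) (t s : ℝ) :
    couplingCost G (t • A + s • B) = t * couplingCost G A + s * couplingCost G B := by
  rw [couplingCost, couplingCost, couplingCost,
    ← finsum_mul_add_mul (f := fun p : V × V => A p.1 p.2 * (G.dist p.1 p.2 : ℝ))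
      (g := fun p : V × V => B p.1 p.2 * (G.dist p.1 p.2 : ℝ)) (hA.mul_left _) (hB.mul_left _)]
  congr 1 with p
  simp only [Pi.add_apply, Pi.smul_apply, smul_eq_mul]
  ring

lemma couplingCost_single [DecidableEq V] (x y : V) :
    couplingCost G (Pi.single x (Pi.single y 1)) = G.dist x y := by
  simp only [couplingCost, pi_single_pi_single_apply]
  rw [finsum_eq_single _ (x, y) fun p hp => by simp [Pi.single_eq_of_ne hp]]
  simp

lemma bddBelow_transportCosts (m₁ m₂ : V → ℝ) : BddBelow (transportCosts G m₁ m₂) :=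
  ⟨0, by rintro _ ⟨A, hA, rfl⟩; exact hA.couplingCost_nonneg⟩

lemma transportDist_combo_le {m₁ m₂ n₁ n₂ : V → ℝ} (hm : (transportCosts G m₁ m₂).Nonempty)
    (hn : (transportCosts G n₁ n₂).Nonempty) {t : ℝ} (h0 : 0 ≤ t) (h1 : t ≤ 1) :
    transportDist G (t • m₁ + (1 - t) • n₁) (t • m₂ + (1 - t) • n₂)
      ≤ t * transportDist G m₁ m₂ + (1 - t) * transportDist G n₁ n₂ := by
  have h0' : 0 ≤ 1 - t := sub_nonneg.2 h1
  have hsub : t • transportCosts G m₁ m₂ + (1 - t) • transportCosts G n₁ n₂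
      ⊆ transportCosts G (t • m₁ + (1 - t) • n₁) (t • m₂ + (1 - t) • n₂) := by
    rintro _ ⟨_, ⟨_, ⟨A, hA, rfl⟩, rfl⟩, _, ⟨_, ⟨B, hB, rfl⟩, rfl⟩, rfl⟩
    exact ⟨_, hA.combo hB h0 h1, (couplingCost_smul_add_smul hA.1 hB.1 t (1 - t)).symm⟩
  calc transportDist G (t • m₁ + (1 - t) • n₁) (t • m₂ + (1 - t) • n₂)
      ≤ sInf (t • transportCosts G m₁ m₂ + (1 - t) • transportCosts G n₁ n₂) :=
        csInf_le_csInf (bddBelow_transportCosts _ _) ((hm.smul_set).add hn.smul_set) hsub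
    _ = t * transportDist G m₁ m₂ + (1 - t) * transportDist G n₁ n₂ := by
      rw [csInf_add hm.smul_set ((bddBelow_transportCosts _ _).smul_of_nonneg h0) hn.smul_set
        ((bddBelow_transportCosts _ _).smul_of_nonneg h0'), Real.sInf_smul_of_nonneg h0,
        Real.sInf_smul_of_nonneg h0']
      rfl

lemma transportDist_single_le [DecidableEq V] (x y : V) :
    transportDist G (Pi.single x 1) (Pi.single y 1) ≤ G.dist x y :=
  csInf_le (bddBelow_transportCosts _ _) ⟨_, isCoupling_single x y, (couplingCost_single x y).symm⟩

end Transport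

section LazyWalk

variable (G : SimpleGraph V) [G.LocallyFinite]

lemma lazyWalk_eq_smul_add [DecidableEq V] (α : ℝ) (x : V) :
    lazyWalk G α x = α • Pi.single x 1 + (1 - α) • lazyWalk G 0 x := by
  ext v
  simp only [lazyWalk, Pi.add_apply, Pi.smul_apply, smul_eq_mul, Pi.single_apply]
  split_ifs <;> ring

lemma lazyWalk_zero_nonneg (x : V) : 0 ≤ lazyWalk G 0 x := fun v => by
  simp only [lazyWalk]
  split_ifs <;> positivity

lemma hasFiniteSupport_lazyWalk (α : ℝ) (x : V) : HasFiniteSupport (lazyWalk G α x) :=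
  ((G.neighborSet x).toFinite.insert x).subset fun v hv => by
    by_contra h
    simp only [Set.mem_insert_iff, SimpleGraph.mem_neighborSet, not_or] at h
    simp [lazyWalk, h.1, h.2] at hv

lemma finsum_lazyWalk_zero {x : V} (hx : 0 < G.degree x) : ∑ᶠ v, lazyWalk G 0 x v = 1 := by
  classical
  have hsupp : support (lazyWalk G 0 x) ⊆ G.neighborFinset x := fun v hv => by
    by_contra h
    simp_all [lazyWalk]
  have hval : ∀ v ∈ G.neighborFinset x, lazyWalk G 0 x v = (G.degree x : ℝ)⁻¹ := fun v hv => by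
    have hadj : G.Adj x v := (G.mem_neighborFinset x v).1 hv
    simp [lazyWalk, hadj.ne.symm, hadj]
  rw [finsum_eq_sum_of_support_subset _ hsupp, Finset.sum_congr rfl hval, Finset.sum_const,
    G.card_neighborFinset_eq_degree, nsmul_eq_mul, mul_inv_cancel₀ (by positivity)]

lemma transportCosts_lazyWalk_zero_nonempty {x y : V} (hx : 0 < G.degree x)
    (hy : 0 < G.degree y) : (transportCosts G (lazyWalk G 0 x) (lazyWalk G 0 y)).Nonempty :=
  ⟨_, _, isCoupling_mul (lazyWalk_zero_nonneg G x) (lazyWalk_zero_nonneg G y)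
    (hasFiniteSupport_lazyWalk G 0 x) (hasFiniteSupport_lazyWalk G 0 y)
    (finsum_lazyWalk_zero G hx) (finsum_lazyWalk_zero G hy), rfl⟩

lemma transportDist_lazyWalk_le {x y : V} (hx : 0 < G.degree x) (hy : 0 < G.degree y) {α : ℝ}
    (h0 : 0 ≤ α) (h1 : α ≤ 1) :
    transportDist G (lazyWalk G α x) (lazyWalk G α y)
      ≤ α * G.dist x y + (1 - α) * transportDist G (lazyWalk G 0 x) (lazyWalk G 0 y) := by
  classical
  rw [lazyWalk_eq_smul_add G α x, lazyWalk_eq_smul_add G α y]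
  refine (transportDist_combo_le ⟨_, _, isCoupling_single x y, rfl⟩
    (transportCosts_lazyWalk_zero_nonempty G hx hy) h0 h1).trans ?_
  gcongr
  exact transportDist_single_le x y

lemma one_sub_transportDist_le_alphaRicci_div {x y : V} (hxy : G.Adj x y) {α : ℝ} (h0 : 0 ≤ α)
    (h1 : α < 1) :
    1 - transportDist G (lazyWalk G 0 x) (lazyWalk G 0 y) ≤ alphaRicci G α x y / (1 - α) := by
  have hd : (G.dist x y : ℝ) = 1 := by exact_mod_cast SimpleGraph.dist_eq_one_iff_adj.mpr hxy
  have hW := transportDist_lazyWalk_le G ((G.degree_pos_iff_exists_adj x).2 ⟨y, hxy⟩)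
    ((G.degree_pos_iff_exists_adj y).2 ⟨x, hxy.symm⟩) h0 h1.le
  rw [hd] at hW
  rw [alphaRicci, hd, div_one, le_div_iff₀ (sub_pos.2 h1)]
  linarith

end LazyWalk

theorem curvature_ge_idleness_zero_general (G : SimpleGraph V) [G.LocallyFinite] :
    ∀ x y : V, G.Adj x y → ∀ κ : ℝ, HasLLYCurv G x y κ →
      1 - transportDist G (lazyWalk G 0 x) (lazyWalk G 0 y) ≤ κ := by
  intro x y hxy κ hκ
  refine ge_of_tendsto hκ ?_
  filter_upwards [Ioo_mem_nhdsLT zero_lt_one] with α hα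
  exact one_sub_transportDist_le_alphaRicci_div G hxy hα.1.le hα.2

/-- For every edge `xy` of a simple connected graph,
`κ_LLY(x,y) ≥ κ_0(x,y) = 1 - W(m_x^0, m_y^0)`. -/
theorem curvature_ge_idleness_zero (G : SimpleGraph V) [G.LocallyFinite]
    (hconn : G.Connected) :
    ∀ x y : V, G.Adj x y → ∀ κ : ℝ, HasLLYCurv G x y κ →
      1 - transportDist G (lazyWalk G 0 x) (lazyWalk G 0 y) ≤ κ :=
  curvature_ge_idleness_zero_general G
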